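/- arXiv:1312.5118 — 5 statements merged into one kernel-verified Lean document; each statement's English description precedes it below -/
import Mathlib

section
/- Let μ be a positive Borel measure on an open set G ⊂ ℝⁿ with μ(G) < ∞, let 0 < δ < 1, 0 < τ ≤ ∞, and 0 < p ≤ q < ∞ (with the convention B(y, τ·dist(y,∂G)) := ℝⁿ when τ = ∞). Then the following are equivalent: (A) there is a constant C₁ > 0 such that for every u ∈ L^∞(G; μ), inf_{a ∈ ℝ} sup_{t > 0} μ({x ∈ G : |u(x) − a| > t}) · t^q ≤ C₁ ( ∫_G ∫_{G ∩ B(y, τ·dist(y,∂G))} |u(y) − u(z)|^p / |y − z|^{n+δp} dμ(z) dμ(y) )^{q/p}; (B) there is a constant C₂ > 0 such that for every u ∈ L¹(G; μ), inf_{a ∈ ℝ} ∫_G |u(x) − a|^q dμ(x) ≤ C₂ ( ∫_G ∫_{G ∩ B(y, τ·dist(y,∂G))} |u(y) − u(z)|^p / |y − z|^{n+δp} dμ(z) dμ(y) )^{q/p}. Moreover, in the implication from (A) to (B) one may take C₂ = C(p,q)·C₁ with C(p,q) depending only on p and q, and in the converse implication C₁ = C₂. -/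
open MeasureTheory Metric Set ENNReal

/-- The fractional energy
`∫_G ∫_{G ∩ B(y, τ·dist(y,∂G))} |u(y) − u(z)|^p / |y − z|^{n+δp} dμ(z) dμ(y)`,
with the convention that `B(y, τ·dist(y,∂G)) = ℝⁿ` when `τ = ∞`. -/
noncomputable def fracEnergy {n : ℕ} (G : Set (EuclideanSpace ℝ (Fin n)))
    (μ : Measure (EuclideanSpace ℝ (Fin n))) (τ : ℝ≥0∞) (δ p : ℝ)
    (u : EuclideanSpace ℝ (Fin n) → ℝ) : ℝ≥0∞ :=
  ∫⁻ y in G,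
    (∫⁻ z in G ∩ (if τ = ∞ then Set.univ
        else Metric.ball y (τ.toReal * Metric.infDist y (frontier G))),
      ENNReal.ofReal (|u y - u z| ^ p / dist y z ^ ((n : ℝ) + δ * p)) ∂μ) ∂μ

/-- Condition (A): the weak type improved fractional Poincaré inequality with constant `C₁`,
for all `u ∈ L^∞(G; μ)`. -/
def WeakTypeFracPoincare {n : ℕ} (G : Set (EuclideanSpace ℝ (Fin n)))
    (μ : Measure (EuclideanSpace ℝ (Fin n))) (τ : ℝ≥0∞) (δ p q : ℝ) (C₁ : ℝ) : Prop :=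
  ∀ u : EuclideanSpace ℝ (Fin n) → ℝ, MemLp u ⊤ (μ.restrict G) →
    (⨅ a : ℝ, ⨆ t : ℝ, ⨆ _ : 0 < t,
        μ {x ∈ G | t < |u x - a|} * ENNReal.ofReal (t ^ q)) ≤
      ENNReal.ofReal C₁ * (fracEnergy G μ τ δ p u) ^ (q / p)

/-- Condition (B): the strong type improved fractional Poincaré inequality with constant `C₂`,
for all `u ∈ L¹(G; μ)`. -/
def StrongTypeFracPoincare {n : ℕ} (G : Set (EuclideanSpace ℝ (Fin n)))
    (μ : Measure (EuclideanSpace ℝ (Fin n))) (τ : ℝ≥0∞) (δ p q : ℝ) (C₂ : ℝ) : Prop :=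
  ∀ u : EuclideanSpace ℝ (Fin n) → ℝ, Integrable u (μ.restrict G) →
    (⨅ a : ℝ, ∫⁻ x in G, ENNReal.ofReal (|u x - a| ^ q) ∂μ) ≤
      ENNReal.ofReal C₂ * (fracEnergy G μ τ δ p u) ^ (q / p)

/-!
`(B) ⇒ (A)` is Chebyshev's inequality. For `(A) ⇒ (B)` we follow Maz'ya's truncation argument.
Subtracting a median `b` of `u`, it suffices to bound `∫ v ^ q` for `v = (u - b)⁺` and
`v = (b - u)⁺`, each of which vanishes on half of `G`. Applying `(A)` to the dyadic truncation
`v_k = min ((v - 2 ^ k)⁺) (2 ^ k)` bounds `μ {2 ^ (k + 1) ≤ v} · 2 ^ (k q)` by the `q / p`-th power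
of the energy of `v_k`: no constant approximates `v_k` both where `v ≥ 2 ^ (k + 1)` and where
`v = 0`. Summing over `k`, the left-hand sides dominate `∫ v ^ q`; on the right, `q / p ≥ 1` lets
the sum pass inside the power, and `∑ k, |v_k y - v_k z| ^ p ≤ C_p |v y - v z| ^ p` pointwise.
-/

theorem ENNReal.tsum_rpow_le_rpow_tsum {ι : Type*} (f : ι → ℝ≥0∞) {r : ℝ} (hr : 1 ≤ r) :
    ∑' i, f i ^ r ≤ (∑' i, f i) ^ r := by
  have hsplit (x : ℝ≥0∞) : x ^ r = x ^ (r - 1) * x := by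
    conv_lhs => rw [← sub_add_cancel r 1]
    rw [rpow_add_of_nonneg _ _ (sub_nonneg.2 hr) zero_le_one, rpow_one]
  calc ∑' i, f i ^ r = ∑' i, f i ^ (r - 1) * f i := by simp_rw [← hsplit]
    _ ≤ ∑' i, (∑' j, f j) ^ (r - 1) * f i := by
        gcongr with i
        exact ENNReal.le_tsum i
    _ = (∑' i, f i) ^ r := by rw [ENNReal.tsum_mul_left, hsplit]

theorem two_zpow_rpow_eq_mul_pow {p : ℝ} {k K : ℤ} (hk : k ≤ K) :
    ((2:ℝ) ^ k) ^ p = ((2:ℝ) ^ K) ^ p * ((2 ^ p)⁻¹) ^ (K - k).toNat := by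
  obtain ⟨m, rfl⟩ : ∃ m : ℕ, k = K - m := ⟨(K - k).toNat, by omega⟩
  have hm : (K - (K - m)).toNat = m := by omega
  rw [hm, zpow_sub₀ two_ne_zero, zpow_natCast, Real.div_rpow (by positivity) (by positivity),
    ← Real.rpow_natCast_mul (by norm_num), mul_comm, Real.rpow_mul_natCast (by norm_num),
    div_eq_mul_inv, inv_pow]

theorem sum_two_zpow_rpow_le {p : ℝ} (hp : 0 < p) {F : Finset ℤ} {K : ℤ} (hF : ∀ k ∈ F, k ≤ K) :
    ∑ k ∈ F, ((2:ℝ) ^ k) ^ p ≤ (1 - (2 ^ p)⁻¹)⁻¹ * ((2:ℝ) ^ K) ^ p := by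
  set r : ℝ := (2 ^ p)⁻¹
  have hr1 : r < 1 := inv_lt_one_of_one_lt₀ (Real.one_lt_rpow one_lt_two hp)
  have hr0 : 0 ≤ r := by positivity
  have hinj : Set.InjOn (fun k => (K - k).toNat) F := fun x hx y hy hxy => by
    have := hF x hx; have := hF y hy; simp only at hxy; omega
  calc ∑ k ∈ F, ((2:ℝ) ^ k) ^ p
      = ((2:ℝ) ^ K) ^ p * ∑ m ∈ F.image (fun k => (K - k).toNat), r ^ m := by
        rw [Finset.sum_image hinj, Finset.mul_sum]
        exact Finset.sum_congr rfl fun k hk => two_zpow_rpow_eq_mul_pow (hF k hk)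
    _ ≤ ((2:ℝ) ^ K) ^ p * ∑' m : ℕ, r ^ m := by
        gcongr
        exact Summable.sum_le_tsum _ (fun _ _ => by positivity)
          (summable_geometric_of_lt_one hr0 hr1)
    _ = (1 - r)⁻¹ * ((2:ℝ) ^ K) ^ p := by rw [tsum_geometric_of_lt_one hr0 hr1, mul_comm]

noncomputable def dyadicTrunc (k : ℤ) (x : ℝ) : ℝ := min (max (x - 2 ^ k) 0) (2 ^ k)

namespace dyadicTrunc

theorem nonneg (k : ℤ) (x : ℝ) : 0 ≤ dyadicTrunc k x :=
  le_min (le_max_right _ _) (zpow_pos two_pos k).le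

theorem le_zpow (k : ℤ) (x : ℝ) : dyadicTrunc k x ≤ 2 ^ k := min_le_right _ _

theorem eq_zero {k : ℤ} {x : ℝ} (h : x ≤ 2 ^ k) : dyadicTrunc k x = 0 := by
  rw [dyadicTrunc, max_eq_right (sub_nonpos.2 h), min_eq_left (zpow_pos two_pos k).le]

theorem eq_zpow {k : ℤ} {x : ℝ} (h : 2 ^ (k + 1) ≤ x) : dyadicTrunc k x = 2 ^ k := by
  rw [zpow_add_one₀ two_ne_zero] at h
  have := zpow_pos (two_pos (α := ℝ)) k
  rw [dyadicTrunc, max_eq_left (by linarith), min_eq_right (by linarith)]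

theorem continuous (k : ℤ) : Continuous (dyadicTrunc k) := by
  unfold dyadicTrunc
  fun_prop

theorem abs_sub_le (k : ℤ) (a b : ℝ) : |dyadicTrunc k a - dyadicTrunc k b| ≤ |a - b| :=
  calc |dyadicTrunc k a - dyadicTrunc k b|
      ≤ max |max (a - 2 ^ k) 0 - max (b - 2 ^ k) 0| |(2:ℝ) ^ k - 2 ^ k| :=
        abs_min_sub_min_le_max _ _ _ _
    _ = |max (a - 2 ^ k) 0 - max (b - 2 ^ k) 0| := by simp
    _ ≤ |(a - 2 ^ k) - (b - 2 ^ k)| := abs_max_sub_max_le_abs _ _ _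
    _ = |a - b| := by ring_nf

theorem abs_sub_le_zpow (k : ℤ) (a b : ℝ) : |dyadicTrunc k a - dyadicTrunc k b| ≤ 2 ^ k :=
  abs_sub_le_iff.2 ⟨by linarith [nonneg k b, le_zpow k a], by linarith [nonneg k a, le_zpow k b]⟩

theorem mem_Icc_log_of_ne {k : ℤ} {a b : ℝ} (hk : |a - b| < 2 ^ k)
    (hne : dyadicTrunc k a ≠ dyadicTrunc k b) :
    k ∈ Finset.Icc (Int.log 2 (max a b) - 1) (Int.log 2 (max a b)) := by
  have h2k := zpow_pos (two_pos (α := ℝ)) k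
  have hmax : 2 ^ k < max a b := by
    by_contra! h
    exact hne (by rw [eq_zero ((le_max_left a b).trans h), eq_zero ((le_max_right a b).trans h)])
  have hmin : min a b < 2 ^ (k + 1) := by
    by_contra! h
    exact hne (by rw [eq_zpow (h.trans (min_le_left a b)), eq_zpow (h.trans (min_le_right a b))])
  have hmax' : max a b < 2 ^ (k + 2) := by
    rw [← max_sub_min_eq_abs'] at hk
    rw [zpow_add_one₀ two_ne_zero] at hmin
    rw [zpow_add₀ two_ne_zero]
    linarith
  have hpos : 0 < max a b := h2k.trans hmax
  have h1 : k ≤ Int.log 2 (max a b) :=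
    (Int.zpow_le_iff_le_log (b := 2) one_lt_two hpos).1 (by exact_mod_cast hmax.le)
  have h2 : Int.log 2 (max a b) < k + 2 :=
    (Int.lt_zpow_iff_log_lt (b := 2) one_lt_two hpos).1 (by exact_mod_cast hmax')
  exact Finset.mem_Icc.2 ⟨by omega, h1⟩

end dyadicTrunc

theorem inv_one_sub_inv_two_rpow_nonneg {p : ℝ} (hp : 0 < p) : 0 ≤ (1 - ((2:ℝ) ^ p)⁻¹)⁻¹ :=
  inv_nonneg.2 (sub_nonneg.2 (inv_le_one_of_one_le₀ (Real.one_lt_rpow one_lt_two hp).le))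

theorem dyadicTrunc.sum_filter_zpow_le_rpow_le {p : ℝ} (hp : 0 < p) (F : Finset ℤ) {a b : ℝ}
    (hab : 0 < |a - b|) :
    ∑ k ∈ F with (2:ℝ) ^ k ≤ |a - b|, |dyadicTrunc k a - dyadicTrunc k b| ^ p ≤
      (1 - (2 ^ p)⁻¹)⁻¹ * |a - b| ^ p := by
  have hlog : ∀ k ∈ F.filter (fun k => (2:ℝ) ^ k ≤ |a - b|), k ≤ Int.log 2 |a - b| := fun k hk =>
    (Int.zpow_le_iff_le_log (b := 2) one_lt_two hab).1
      (by exact_mod_cast (Finset.mem_filter.1 hk).2)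
  calc ∑ k ∈ F with (2:ℝ) ^ k ≤ |a - b|, |dyadicTrunc k a - dyadicTrunc k b| ^ p
      ≤ ∑ k ∈ F with (2:ℝ) ^ k ≤ |a - b|, ((2:ℝ) ^ k) ^ p := by
        gcongr with k
        exact abs_sub_le_zpow k a b
    _ ≤ (1 - (2 ^ p)⁻¹)⁻¹ * ((2:ℝ) ^ Int.log 2 |a - b|) ^ p := sum_two_zpow_rpow_le hp hlog
    _ ≤ (1 - (2 ^ p)⁻¹)⁻¹ * |a - b| ^ p := by
        have := inv_one_sub_inv_two_rpow_nonneg hp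
        gcongr
        exact_mod_cast Int.zpow_log_le_self (b := 2) one_lt_two hab

theorem dyadicTrunc.sum_filter_lt_zpow_rpow_le {p : ℝ} (hp : 0 < p) (F : Finset ℤ) (a b : ℝ) :
    ∑ k ∈ F with |a - b| < 2 ^ k, |dyadicTrunc k a - dyadicTrunc k b| ^ p ≤ 2 * |a - b| ^ p := by
  set L := Int.log 2 (max a b)
  have hsub : ∀ k ∈ F.filter (fun k => |a - b| < 2 ^ k),
      |dyadicTrunc k a - dyadicTrunc k b| ^ p ≠ 0 → k ∈ Finset.Icc (L - 1) L := by
    intro k hk hne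
    refine mem_Icc_log_of_ne (Finset.mem_filter.1 hk).2 fun heq => hne ?_
    rw [heq, sub_self, abs_zero, Real.zero_rpow hp.ne']
  calc ∑ k ∈ F with |a - b| < 2 ^ k, |dyadicTrunc k a - dyadicTrunc k b| ^ p
      ≤ ∑ k ∈ Finset.Icc (L - 1) L, |dyadicTrunc k a - dyadicTrunc k b| ^ p := by
        rw [← Finset.sum_filter_ne_zero]
        exact Finset.sum_le_sum_of_subset_of_nonneg
          (fun k hk => hsub k (Finset.mem_filter.1 hk).1 (Finset.mem_filter.1 hk).2)
          fun _ _ _ => by positivity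
    _ ≤ ∑ k ∈ Finset.Icc (L - 1) L, |a - b| ^ p :=
        Finset.sum_le_sum fun k _ => Real.rpow_le_rpow (abs_nonneg _) (abs_sub_le k a b) hp.le
    _ = 2 * |a - b| ^ p := by simp

-- `(1 - 2 ^ (-p))⁻¹` sums the levels `2 ^ k ≤ |a - b|` (a geometric series); at most two
-- levels above `|a - b|` contribute, each at most `|a - b| ^ p`.
noncomputable def dyadicTruncConst (p : ℝ) : ℝ := 2 + (1 - (2 ^ p)⁻¹)⁻¹

theorem dyadicTruncConst_pos {p : ℝ} (hp : 0 < p) : 0 < dyadicTruncConst p := by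
  have := inv_one_sub_inv_two_rpow_nonneg hp
  rw [dyadicTruncConst]
  positivity

theorem dyadicTrunc.sum_abs_sub_rpow_le {p : ℝ} (hp : 0 < p) (F : Finset ℤ) (a b : ℝ) :
    ∑ k ∈ F, |dyadicTrunc k a - dyadicTrunc k b| ^ p ≤ dyadicTruncConst p * |a - b| ^ p := by
  rcases (abs_nonneg (a - b)).eq_or_lt with hab | hab
  · obtain rfl : a = b := sub_eq_zero.1 (abs_eq_zero.1 hab.symm)
    simp [Real.zero_rpow hp.ne']
  rw [← Finset.sum_filter_add_sum_filter_not F (fun k => (2:ℝ) ^ k ≤ |a - b|), dyadicTruncConst,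
    add_mul, add_comm (2 * _)]
  simp only [not_le]
  exact add_le_add (sum_filter_zpow_le_rpow_le hp F hab) (sum_filter_lt_zpow_rpow_le hp F a b)

section Measure

variable {α : Type*} {mα : MeasurableSpace α} {ν : Measure α}

theorem sum_lintegral_le_lintegral_sum {ι : Type*} (F : Finset ι) (f : ι → α → ℝ≥0∞) :
    ∑ k ∈ F, ∫⁻ x, f k x ∂ν ≤ ∫⁻ x, ∑ k ∈ F, f k x ∂ν := by
  classical
  induction F using Finset.induction_on with
  | empty => simp
  | insert a F ha ih =>
    simp only [Finset.sum_insert ha]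
    exact (add_le_add_right ih _).trans (le_lintegral_add _ _)

theorem measure_compl_le_half_iff [IsFiniteMeasure ν] {s : Set α} (hs : NullMeasurableSet s ν) :
    ν sᶜ ≤ ν univ / 2 ↔ ν univ / 2 ≤ ν s := by
  rw [← ENNReal.add_le_add_iff_left (measure_ne_top ν s), measure_add_measure_compl₀ hs]
  nth_rw 1 [← ENNReal.add_halves (ν univ)]
  exact ENNReal.add_le_add_iff_right (div_ne_top (measure_ne_top ν univ) two_ne_zero)

theorem measure_Ioi_le_of_forall_lt {ρ : Measure ℝ} {b : ℝ} {m : ℝ≥0∞}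
    (h : ∀ c, b < c → ρ (Ici c) ≤ m) : ρ (Ioi b) ≤ m := by
  obtain ⟨u, hu_anti, hu_gt, hu_lim⟩ := exists_seq_strictAnti_tendsto b
  have hmono : Monotone fun n => Ici (u n) := fun _ _ h => Ici_subset_Ici.2 (hu_anti.antitone h)
  rw [← iUnion_Ici_eq_Ioi_of_lt_of_tendsto hu_gt hu_lim, hmono.measure_iUnion]
  exact iSup_le fun n => h _ (hu_gt n)

theorem measure_Iio_le_of_forall_lt {ρ : Measure ℝ} {b : ℝ} {m : ℝ≥0∞}
    (h : ∀ c < b, ρ (Iic c) ≤ m) : ρ (Iio b) ≤ m := by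
  obtain ⟨u, hu_mono, hu_lt, hu_lim⟩ := exists_seq_strictMono_tendsto b
  have hmono : Monotone fun n => Iic (u n) := fun _ _ h => Iic_subset_Iic.2 (hu_mono.monotone h)
  rw [← iUnion_Iic_eq_Iio_of_lt_of_tendsto hu_lt hu_lim, hmono.measure_iUnion]
  exact iSup_le fun n => h _ (hu_lt n)

theorem exists_median (ρ : Measure ℝ) [IsFiniteMeasure ρ] :
    ∃ b, ρ (Ioi b) ≤ ρ univ / 2 ∧ ρ (Iio b) ≤ ρ univ / 2 := by
  set M := ρ univ
  rcases eq_or_ne M 0 with hM | hM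
  · exact ⟨0, by simp [Measure.measure_univ_eq_zero.1 hM]⟩
  have hhalf : M / 2 < M := ENNReal.half_lt_self hM (measure_ne_top ρ univ)
  have hIic (c : ℝ) : ρ (Ioi c) ≤ M / 2 ↔ M / 2 ≤ ρ (Iic c) := by
    rw [← compl_Iic]; exact measure_compl_le_half_iff measurableSet_Iic.nullMeasurableSet
  have hIio (c : ℝ) : ρ (Ici c) ≤ M / 2 ↔ M / 2 ≤ ρ (Iio c) := by
    rw [← compl_Iio]; exact measure_compl_le_half_iff measurableSet_Iio.nullMeasurableSet
  set S := {c | M / 2 ≤ ρ (Iic c)}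
  have hS_ne : S.Nonempty :=
    ((tendsto_measure_Iic_atTop ρ).eventually (lt_mem_nhds hhalf)).exists.imp fun _ => le_of_lt
  have hS_bdd : BddBelow S := by
    obtain ⟨c₀, hc₀⟩ := ((tendsto_measure_Ici_atBot ρ).eventually (lt_mem_nhds hhalf)).exists
    refine ⟨c₀, fun c hc => le_of_not_gt fun hlt => ?_⟩
    have : ρ (Iio c₀) < M / 2 := not_le.1 fun h => (hIio c₀).2 h |>.not_gt hc₀
    exact (hc.trans (measure_mono (Iic_subset_Iio.2 hlt))).not_gt this
  refine ⟨sInf S, measure_Ioi_le_of_forall_lt fun c hc => ?_,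
    measure_Iio_le_of_forall_lt fun c hc => ?_⟩
  · obtain ⟨s, hs, hsc⟩ := exists_lt_of_csInf_lt hS_ne hc
    exact (measure_mono (Ici_subset_Ioi.2 hsc)).trans ((hIic s).2 hs)
  · have hcS : c ∉ S := notMem_of_lt_csInf hc hS_bdd
    exact (not_le.1 hcS).le

theorem lintegral_rpow_le_tsum_measure_le {v : α → ℝ} (hv : AEMeasurable v ν) (hv0 : ∀ x, 0 ≤ v x)
    {q : ℝ} (hq : 0 < q) :
    ∫⁻ x, ENNReal.ofReal (v x ^ q) ∂ν ≤
      ∑' k : ℤ, ENNReal.ofReal (((2:ℝ) ^ (k + 2)) ^ q) * ν {x | 2 ^ (k + 1) ≤ v x} := by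
  have hmeas (k : ℤ) : NullMeasurableSet {x | (2:ℝ) ^ (k + 1) ≤ v x} ν :=
    nullMeasurableSet_le aemeasurable_const hv
  have hpoint (x : α) : ENNReal.ofReal (v x ^ q) ≤ ∑' k : ℤ,
      {x | 2 ^ (k + 1) ≤ v x}.indicator (fun _ => ENNReal.ofReal (((2:ℝ) ^ (k + 2)) ^ q)) x := by
    rcases (hv0 x).eq_or_lt with hx | hx
    · simp [← hx, Real.zero_rpow hq.ne']
    refine le_trans ?_ (ENNReal.le_tsum (Int.log 2 (v x) - 1))
    have hlow : (2:ℝ) ^ (Int.log 2 (v x) - 1 + 1) ≤ v x := by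
      rw [sub_add_cancel]; exact_mod_cast Int.zpow_log_le_self (b := 2) one_lt_two hx
    have hup : v x < (2:ℝ) ^ (Int.log 2 (v x) - 1 + 2) := by
      rw [show Int.log 2 (v x) - 1 + 2 = Int.log 2 (v x) + 1 by ring]
      exact_mod_cast Int.lt_zpow_succ_log_self (b := 2) one_lt_two (v x)
    rw [indicator_of_mem (by exact hlow)]
    exact ENNReal.ofReal_le_ofReal (Real.rpow_le_rpow (hv0 x) hup.le hq.le)
  calc ∫⁻ x, ENNReal.ofReal (v x ^ q) ∂ν
      ≤ ∫⁻ x, ∑' k : ℤ, {x | 2 ^ (k + 1) ≤ v x}.indicator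
          (fun _ => ENNReal.ofReal (((2:ℝ) ^ (k + 2)) ^ q)) x ∂ν :=
        lintegral_mono hpoint
    _ = ∑' k : ℤ, ENNReal.ofReal (((2:ℝ) ^ (k + 2)) ^ q) * ν {x | 2 ^ (k + 1) ≤ v x} := by
        rw [lintegral_tsum fun k => aemeasurable_const.indicator₀ (hmeas k)]
        simp_rw [lintegral_indicator_const₀ (hmeas _)]

-- `dyadicTrunc k ∘ v` is `2 ^ k` on the left-hand set and `0` on `{v ≤ 2 ^ k}`, which carries
-- at least half of the mass; every constant `a` is `2 ^ (k - 2)`-far from one of the two values.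
theorem measure_le_measure_dyadicTrunc_sub [IsFiniteMeasure ν] {v : α → ℝ} (hv : AEMeasurable v ν)
    (hv_half : ν {x | 0 < v x} ≤ ν univ / 2) (k : ℤ) (a : ℝ) :
    ν {x | 2 ^ (k + 1) ≤ v x} ≤ ν {x | 2 ^ (k - 2) < |dyadicTrunc k (v x) - a|} := by
  have ht : (0:ℝ) < 2 ^ (k - 2) := by positivity
  have h4 : (2:ℝ) ^ k = 4 * 2 ^ (k - 2) := by
    rw [show (4:ℝ) = 2 ^ (2:ℤ) by norm_num, ← zpow_add₀ two_ne_zero]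
    ring_nf
  rcases lt_or_ge a (2 * 2 ^ (k - 2)) with ha | ha
  · refine measure_mono fun x (hx : 2 ^ (k + 1) ≤ v x) => ?_
    rw [mem_ofPred_eq, dyadicTrunc.eq_zpow hx]
    exact (by linarith : (2:ℝ) ^ (k - 2) < 2 ^ k - a).trans_le (le_abs_self _)
  have h2k : (0:ℝ) < 2 ^ k := by positivity
  have h2k1 : (0:ℝ) < 2 ^ (k + 1) := by positivity
  calc ν {x | 2 ^ (k + 1) ≤ v x} ≤ ν univ / 2 :=
        (measure_mono fun x (hx : 2 ^ (k + 1) ≤ v x) => h2k1.trans_le hx).trans hv_half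
    _ ≤ ν {x | v x ≤ 2 ^ k} := by
        refine (measure_compl_le_half_iff (nullMeasurableSet_le hv aemeasurable_const)).1 ?_
        exact (measure_mono fun x (hx : ¬v x ≤ 2 ^ k) => h2k.trans (not_le.1 hx)).trans hv_half
    _ ≤ ν {x | 2 ^ (k - 2) < |dyadicTrunc k (v x) - a|} := by
        refine measure_mono fun x (hx : v x ≤ 2 ^ k) => ?_
        rw [mem_ofPred_eq, dyadicTrunc.eq_zero hx, zero_sub, abs_neg]
        exact (by linarith : (2:ℝ) ^ (k - 2) < a).trans_le (le_abs_self _)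

end Measure

section FracEnergy

variable {n : ℕ} {G : Set (EuclideanSpace ℝ (Fin n))} {μ : Measure (EuclideanSpace ℝ (Fin n))}
  {τ : ℝ≥0∞} {δ p q C : ℝ}

theorem tsum_fracEnergy_le {ι : Type*} {f : ι → EuclideanSpace ℝ (Fin n) → ℝ}
    {g : EuclideanSpace ℝ (Fin n) → ℝ} (hC : 0 ≤ C)
    (h : ∀ (F : Finset ι) (y z), ∑ k ∈ F, |f k y - f k z| ^ p ≤ C * |g y - g z| ^ p) :
    ∑' k, fracEnergy G μ τ δ p (f k) ≤ ENNReal.ofReal C * fracEnergy G μ τ δ p g := by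
  rw [ENNReal.tsum_eq_iSup_sum]
  refine iSup_le fun F => ?_
  unfold fracEnergy
  rw [← lintegral_const_mul' _ _ ofReal_ne_top]
  refine (sum_lintegral_le_lintegral_sum F _).trans (lintegral_mono fun y => ?_)
  rw [← lintegral_const_mul' _ _ ofReal_ne_top]
  refine (sum_lintegral_le_lintegral_sum F _).trans (lintegral_mono fun z => ?_)
  rw [← ENNReal.ofReal_mul hC, ← ENNReal.ofReal_sum_of_nonneg fun k _ => by positivity,
    ← Finset.sum_div, ← mul_div_assoc]
  exact ENNReal.ofReal_le_ofReal (div_le_div_of_nonneg_right (h F y z) (by positivity))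

theorem measure_sep_eq_restrict (hG : MeasurableSet G) (P : EuclideanSpace ℝ (Fin n) → Prop) :
    μ {x ∈ G | P x} = μ.restrict G {x | P x} := by
  rw [Measure.restrict_apply' hG, ofPred_inter_eq_sep]

theorem StrongTypeFracPoincare.weakType (hμ : μ G ≠ ∞) (hq : 0 < q)
    (hB : StrongTypeFracPoincare G μ τ δ p q C) : WeakTypeFracPoincare G μ τ δ p q C := by
  have := isFiniteMeasure_restrict.2 hμ
  intro u hu
  refine (iInf_mono fun a => iSup₂_le fun t ht => ?_).trans (hB u (hu.integrable le_top))
  have hmeas : AEMeasurable (fun x => ENNReal.ofReal (|u x - a| ^ q)) (μ.restrict G) := by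
    have := hu.1.aemeasurable
    fun_prop
  calc μ {x ∈ G | t < |u x - a|} * ENNReal.ofReal (t ^ q)
      ≤ ENNReal.ofReal (t ^ q) *
          μ.restrict G {x | ENNReal.ofReal (t ^ q) ≤ ENNReal.ofReal (|u x - a| ^ q)} := by
        rw [mul_comm, ← ofPred_inter_eq_sep]
        refine mul_le_mul_right ((measure_mono (inter_subset_inter_left G fun x hx => ?_)).trans
          (Measure.le_restrict_apply _ _)) _
        exact ENNReal.ofReal_le_ofReal (Real.rpow_le_rpow ht.le (le_of_lt hx) hq.le)
    _ ≤ ∫⁻ x in G, ENNReal.ofReal (|u x - a| ^ q) ∂μ := mul_meas_ge_le_lintegral₀ hmeas _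

theorem WeakTypeFracPoincare.measure_mul_le_fracEnergy_dyadicTrunc
    (hA : WeakTypeFracPoincare G μ τ δ p q C) (hG : MeasurableSet G) (hμ : μ G ≠ ∞)
    {v : EuclideanSpace ℝ (Fin n) → ℝ} (hv : AEMeasurable v (μ.restrict G))
    (hv_half : μ.restrict G {x | 0 < v x} ≤ μ.restrict G univ / 2) (k : ℤ) :
    μ.restrict G {x | 2 ^ (k + 1) ≤ v x} * ENNReal.ofReal ((2 ^ (k - 2)) ^ q) ≤
      ENNReal.ofReal C * fracEnergy G μ τ δ p (fun x => dyadicTrunc k (v x)) ^ (q / p) := by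
  have := isFiniteMeasure_restrict.2 hμ
  have hbdd : MemLp (fun x => dyadicTrunc k (v x)) ⊤ (μ.restrict G) := by
    refine memLp_top_of_bound
      ((dyadicTrunc.continuous k).comp_aestronglyMeasurable hv.aestronglyMeasurable) (2 ^ k)
      (ae_of_all _ fun x => ?_)
    rw [Real.norm_eq_abs, abs_of_nonneg (dyadicTrunc.nonneg k _)]
    exact dyadicTrunc.le_zpow k _
  refine le_trans (le_iInf fun a => ?_) (hA _ hbdd)
  refine le_iSup₂_of_le (2 ^ (k - 2) : ℝ) (by positivity) ?_
  rw [measure_sep_eq_restrict hG]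
  gcongr ?_ * _
  exact measure_le_measure_dyadicTrunc_sub hv hv_half k a

theorem tsum_fracEnergy_dyadicTrunc_le (hp : 0 < p) {v g : EuclideanSpace ℝ (Fin n) → ℝ}
    (hvg : ∀ y z, |v y - v z| ≤ |g y - g z|) :
    ∑' k : ℤ, fracEnergy G μ τ δ p (fun x => dyadicTrunc k (v x)) ≤
      ENNReal.ofReal (dyadicTruncConst p) * fracEnergy G μ τ δ p g :=
  tsum_fracEnergy_le (dyadicTruncConst_pos hp).le fun F y z =>
    (dyadicTrunc.sum_abs_sub_rpow_le hp F _ _).trans <| mul_le_mul_of_nonneg_left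
      (Real.rpow_le_rpow (abs_nonneg _) (hvg y z) hp.le) (dyadicTruncConst_pos hp).le

theorem WeakTypeFracPoincare.lintegral_rpow_le (hA : WeakTypeFracPoincare G μ τ δ p q C)
    (hG : MeasurableSet G) (hμ : μ G ≠ ∞) (hp : 0 < p) (hpq : p ≤ q)
    {v g : EuclideanSpace ℝ (Fin n) → ℝ} (hv : AEMeasurable v (μ.restrict G)) (hv0 : ∀ x, 0 ≤ v x)
    (hv_half : μ.restrict G {x | 0 < v x} ≤ μ.restrict G univ / 2)
    (hvg : ∀ y z, |v y - v z| ≤ |g y - g z|) :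
    ∫⁻ x in G, ENNReal.ofReal (v x ^ q) ∂μ ≤
      ENNReal.ofReal (16 ^ q * dyadicTruncConst p ^ (q / p) * C) *
        fracEnergy G μ τ δ p g ^ (q / p) := by
  set E := fun k : ℤ => fracEnergy G μ τ δ p fun x => dyadicTrunc k (v x)
  have hscale (k : ℤ) : ((2:ℝ) ^ (k + 2)) ^ q = 16 ^ q * (2 ^ (k - 2)) ^ q := by
    rw [← Real.mul_rpow (by norm_num) (by positivity), show (16:ℝ) = 2 ^ (4:ℤ) by norm_num,
      ← zpow_add₀ two_ne_zero]
    ring_nf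
  have hqp : 1 ≤ q / p := (one_le_div hp).2 hpq
  have hqp0 : 0 ≤ q / p := zero_le_one.trans hqp
  have hC : 0 ≤ dyadicTruncConst p := (dyadicTruncConst_pos hp).le
  calc ∫⁻ x in G, ENNReal.ofReal (v x ^ q) ∂μ
      ≤ ∑' k : ℤ, ENNReal.ofReal (((2:ℝ) ^ (k + 2)) ^ q) * μ.restrict G {x | 2 ^ (k + 1) ≤ v x} :=
        lintegral_rpow_le_tsum_measure_le hv hv0 (hp.trans_le hpq)
    _ = ENNReal.ofReal (16 ^ q) * ∑' k : ℤ,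
          μ.restrict G {x | 2 ^ (k + 1) ≤ v x} * ENNReal.ofReal ((2 ^ (k - 2)) ^ q) := by
        rw [← ENNReal.tsum_mul_left]
        congr 1 with k
        rw [hscale, ENNReal.ofReal_mul (by positivity)]
        ring
    _ ≤ ENNReal.ofReal (16 ^ q) * ∑' k : ℤ, ENNReal.ofReal C * E k ^ (q / p) := by
        gcongr _ * ?_
        exact ENNReal.tsum_le_tsum (hA.measure_mul_le_fracEnergy_dyadicTrunc hG hμ hv hv_half)
    _ ≤ ENNReal.ofReal (16 ^ q) * ENNReal.ofReal C * (∑' k : ℤ, E k) ^ (q / p) := by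
        rw [ENNReal.tsum_mul_left, mul_assoc]
        gcongr
        exact ENNReal.tsum_rpow_le_rpow_tsum _ hqp
    _ ≤ ENNReal.ofReal (16 ^ q) * ENNReal.ofReal C *
          (ENNReal.ofReal (dyadicTruncConst p) * fracEnergy G μ τ δ p g) ^ (q / p) := by
        gcongr
        exact tsum_fracEnergy_dyadicTrunc_le hp hvg
    _ = _ := by
        rw [ENNReal.mul_rpow_of_nonneg _ _ hqp0, ENNReal.ofReal_rpow_of_nonneg hC hqp0,
          ENNReal.ofReal_mul (by positivity), ENNReal.ofReal_mul (by positivity)]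
        ring

theorem WeakTypeFracPoincare.strongType (hA : WeakTypeFracPoincare G μ τ δ p q C)
    (hG : MeasurableSet G) (hμ : μ G ≠ ∞) (hp : 0 < p) (hpq : p ≤ q) :
    StrongTypeFracPoincare G μ τ δ p q (2 * 16 ^ q * dyadicTruncConst p ^ (q / p) * C) := by
  have hq : 0 < q := hp.trans_le hpq
  have := isFiniteMeasure_restrict.2 hμ
  intro u hu
  have hu_meas : AEMeasurable u (μ.restrict G) := hu.aemeasurable
  obtain ⟨b, hb_gt, hb_lt⟩ := exists_median ((μ.restrict G).map u)
  rw [Measure.map_apply_of_aemeasurable hu_meas MeasurableSet.univ, preimage_univ,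
    Measure.map_apply_of_aemeasurable hu_meas measurableSet_Ioi] at hb_gt
  rw [Measure.map_apply_of_aemeasurable hu_meas MeasurableSet.univ, preimage_univ,
    Measure.map_apply_of_aemeasurable hu_meas measurableSet_Iio] at hb_lt
  have hpos := hA.lintegral_rpow_le hG hμ hp hpq (v := fun x => max (u x - b) 0) (g := u)
    (by fun_prop) (fun _ => le_max_right _ _)
    (by convert hb_gt using 2; ext x; simp)
    (fun y z => (abs_max_sub_max_le_abs _ _ _).trans_eq (by ring_nf))
  have hneg := hA.lintegral_rpow_le hG hμ hp hpq (v := fun x => max (b - u x) 0) (g := u)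
    (by fun_prop) (fun _ => le_max_right _ _)
    (by convert hb_lt using 2; ext x; simp)
    (fun y z => (abs_max_sub_max_le_abs _ _ _).trans_eq (by rw [abs_sub_comm]; ring_nf))
  have hsplit (t : ℝ) : ENNReal.ofReal (|t| ^ q) =
      ENNReal.ofReal (max t 0 ^ q) + ENNReal.ofReal (max (-t) 0 ^ q) := by
    rcases le_total 0 t with ht | ht <;>
      simp [ht, abs_of_nonneg, abs_of_nonpos, Real.zero_rpow hq.ne']
  refine (iInf_le _ b).trans ?_
  calc ∫⁻ x in G, ENNReal.ofReal (|u x - b| ^ q) ∂μ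
      = ∫⁻ x in G, ENNReal.ofReal (max (u x - b) 0 ^ q) + ENNReal.ofReal (max (b - u x) 0 ^ q) ∂μ :=
        lintegral_congr fun x => by rw [hsplit, neg_sub]
    _ ≤ _ := by
        rw [lintegral_add_left' (by fun_prop)]
        refine (add_le_add hpos hneg).trans_eq ?_
        rw [← two_mul, mul_assoc 2, mul_assoc 2, ENNReal.ofReal_mul zero_le_two,
          ENNReal.ofReal_ofNat]
        ring

end FracEnergy

/-- Theorem 4.1 (truncation): equivalence of the weak and strong type improved fractional
Poincaré inequalities, with constant `C₂ = C(p,q)·C₁` in the direction (A) ⇒ (B),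
and `C₁ = C₂` in the direction (B) ⇒ (A). -/
theorem weak_strong_equivalence (p q : ℝ) (hp : 0 < p) (hpq : p ≤ q) :
    ∃ Cpq : ℝ, 0 < Cpq ∧
      ∀ (n : ℕ) (G : Set (EuclideanSpace ℝ (Fin n))), IsOpen G →
        ∀ (μ : Measure (EuclideanSpace ℝ (Fin n))), μ G < ∞ →
          ∀ (δ : ℝ), δ ∈ Set.Ioo (0 : ℝ) 1 →
            ∀ (τ : ℝ≥0∞), 0 < τ →
              ((∃ C₁ : ℝ, 0 < C₁ ∧ WeakTypeFracPoincare G μ τ δ p q C₁) ↔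
                (∃ C₂ : ℝ, 0 < C₂ ∧ StrongTypeFracPoincare G μ τ δ p q C₂)) ∧
              (∀ C₁ : ℝ, 0 < C₁ → WeakTypeFracPoincare G μ τ δ p q C₁ →
                StrongTypeFracPoincare G μ τ δ p q (Cpq * C₁)) ∧
              (∀ C₂ : ℝ, 0 < C₂ → StrongTypeFracPoincare G μ τ δ p q C₂ →
                WeakTypeFracPoincare G μ τ δ p q C₂) := by
  have hCpq : 0 < 2 * 16 ^ q * dyadicTruncConst p ^ (q / p) :=
    mul_pos (by positivity) (Real.rpow_pos_of_pos (dyadicTruncConst_pos hp) _)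
  refine ⟨_, hCpq, fun n G hG μ hμ δ _ τ _ => ?_⟩
  have weak_strong (C₁ : ℝ) (hA : WeakTypeFracPoincare G μ τ δ p q C₁) :=
    hA.strongType hG.measurableSet hμ.ne hp hpq
  have strong_weak (C₂ : ℝ) (hB : StrongTypeFracPoincare G μ τ δ p q C₂) :=
    hB.weakType hμ.ne (hp.trans_le hpq)
  exact ⟨⟨fun ⟨C₁, hC₁, hA⟩ => ⟨_, mul_pos hCpq hC₁, weak_strong C₁ hA⟩,
      fun ⟨C₂, hC₂, hB⟩ => ⟨C₂, hC₂, strong_weak C₂ hB⟩⟩,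
    fun C₁ _ => weak_strong C₁, fun C₂ _ => strong_weak C₂⟩
end

section
/- Let 0 < δ < n. Then there exists a constant C = C(n, δ) > 0 such that for every f ∈ L¹(ℝⁿ), sup_{t > 0} |{x ∈ ℝⁿ : |I_δ(f)(x)| > t}| · t^{n/(n−δ)} ≤ C · ‖f‖₁^{n/(n−δ)}, where |·| denotes Lebesgue measure. -/
/-!
Hedberg's truncation argument. Split the kernel at a radius `R`. Far from `x` the kernel is at
most `R^{δ-n}`, so the far part of `I_δ f (x)` is at most `R^{δ-n} ‖f‖₁` for every `x`. The near
part is dominated by the convolution of `|f|` with the kernel truncated to the ball of radius `R`,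
whose integral is `‖f‖₁ · c · R^δ` by scaling, where `c` is the (finite) integral of
`|z|^{δ-n}` over the unit ball. Choosing `R` with `R^{δ-n} ‖f‖₁ = t/2`, Chebyshev's inequality
for the near part gives the weak-type bound with constant `2^{n/(n-δ)} c`.
-/

open MeasureTheory Metric Set ENNReal

/-- The Riesz `δ`-potential `I_δ(f)(x) = ∫_{ℝⁿ} f(y) / |x − y|^{n−δ} dy`. -/
noncomputable def rieszPotential {n : ℕ} (δ : ℝ) (f : EuclideanSpace ℝ (Fin n) → ℝ)
    (x : EuclideanSpace ℝ (Fin n)) : ℝ :=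
  ∫ y, f y / dist x y ^ ((n : ℝ) - δ)

open Module

section RadialKernel

variable {E : Type*} [NormedAddCommGroup E] [NormedSpace ℝ E] [MeasurableSpace E] [BorelSpace E]
  [FiniteDimensional ℝ E] (μ : Measure E) [μ.IsAddHaarMeasure]

theorem setIntegral_ball_norm_rpow (α : ℝ) {R : ℝ} (hR : 0 < R) :
    ∫ z in ball (0 : E) R, ‖z‖ ^ (α - finrank ℝ E) ∂μ =
      R ^ α * ∫ z in ball (0 : E) 1, ‖z‖ ^ (α - finrank ℝ E) ∂μ := by
  have hscale := Measure.setIntegral_comp_smul_of_pos μ (fun z : E ↦ ‖z‖ ^ (α - finrank ℝ E))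
    (ball 0 1) hR
  simp only [norm_smul, Real.norm_of_nonneg hR.le, Real.mul_rpow hR.le (norm_nonneg _),
    integral_const_mul, smul_unitBall_of_pos hR, smul_eq_mul] at hscale
  rw [← Real.rpow_natCast, eq_inv_mul_iff_mul_eq₀ (by positivity), ← mul_assoc,
    ← Real.rpow_add hR, add_sub_cancel] at hscale
  exact hscale.symm

theorem lintegral_ball_norm_rpow (hd : 1 ≤ finrank ℝ E) {α : ℝ} (hα : 0 < α) {R : ℝ}
    (hR : 0 < R) :
    ∫⁻ z in ball (0 : E) R, ENNReal.ofReal (‖z‖ ^ (α - finrank ℝ E)) ∂μ =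
      ENNReal.ofReal (R ^ α * ∫ z in ball (0 : E) 1, ‖z‖ ^ (α - finrank ℝ E) ∂μ) := by
  have hint : IntegrableOn (fun z : E ↦ ‖z‖ ^ (α - finrank ℝ E)) (ball 0 R) μ := by
    refine integrableOn_ball_of_norm_le_rpow (C := 1) hd (by linarith : (finrank ℝ E : ℝ) - α < _)
      (ae_of_all _ fun z ↦ ?_) (measurable_norm.pow_const _).aestronglyMeasurable
    rw [Real.norm_of_nonneg (by positivity), one_mul, neg_sub]
  rw [← setIntegral_ball_norm_rpow μ α hR, ofReal_integral_eq_lintegral_ofReal hint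
    (ae_of_all _ fun z ↦ by positivity)]

end RadialKernel

theorem lintegral_lconvolution {G : Type*} [AddGroup G] [MeasurableSpace G] [MeasurableAdd₂ G]
    [MeasurableNeg G] {μ : Measure G} [μ.IsAddLeftInvariant] [SFinite μ] {f g : G → ℝ≥0∞}
    (hf : AEMeasurable f μ) (hg : AEMeasurable g μ) :
    ∫⁻ x, (f ⋆ₗ[μ] g) x ∂μ = (∫⁻ x, f x ∂μ) * ∫⁻ x, g x ∂μ := by
  simp only [lconvolution_def]
  rw [lintegral_lintegral_swap (by fun_prop)]
  have hshift (y : G) : ∫⁻ x, f y * g (-y + x) ∂μ = f y * ∫⁻ x, g x ∂μ := by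
    have hg' : AEMeasurable (fun x ↦ g (-y + x)) μ :=
      hg.comp_quasiMeasurePreserving (measurePreserving_add_left μ (-y)).quasiMeasurePreserving
    rw [lintegral_const_mul'' _ hg', lintegral_add_left_eq_self g]
  simp only [hshift]
  exact lintegral_mul_const'' _ hf

theorem enorm_div_rpow (a : ℝ) {r : ℝ} (hr : 0 ≤ r) (s : ℝ) :
    ‖a / r ^ s‖ₑ = ‖a‖ₑ * ENNReal.ofReal (r ^ (-s)) := by
  rw [div_eq_mul_inv, ← Real.rpow_neg hr, enorm_mul, Real.enorm_eq_ofReal (Real.rpow_nonneg hr _)]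

section RieszPotential

variable {n : ℕ} {δ : ℝ}

noncomputable def truncatedRieszKernel (n : ℕ) (δ R : ℝ) : EuclideanSpace ℝ (Fin n) → ℝ≥0∞ :=
  (ball 0 R).indicator fun z ↦ ENNReal.ofReal (‖z‖ ^ (δ - n))

noncomputable def rieszKernelUnitBallIntegral (n : ℕ) (δ : ℝ) : ℝ :=
  ∫ z in ball (0 : EuclideanSpace ℝ (Fin n)) 1, ‖z‖ ^ (δ - n)

theorem rieszKernelUnitBallIntegral_nonneg : 0 ≤ rieszKernelUnitBallIntegral n δ :=
  setIntegral_nonneg measurableSet_ball fun _ _ ↦ by positivity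

-- No integrability is needed: a non-integrable integrand makes `rieszPotential` vanish.
theorem enorm_rieszPotential_le (f : EuclideanSpace ℝ (Fin n) → ℝ) (hδn : δ ≤ n) {R : ℝ}
    (hR : 0 < R) (x : EuclideanSpace ℝ (Fin n)) :
    ‖rieszPotential δ f x‖ₑ ≤ ((‖f ·‖ₑ) ⋆ₗ truncatedRieszKernel n δ R) x +
      ENNReal.ofReal (R ^ (δ - n)) * ∫⁻ y, ‖f y‖ₑ := by
  have hnear : ∫⁻ y in ball x R, ‖f y / dist x y ^ ((n : ℝ) - δ)‖ₑ =
      ((‖f ·‖ₑ) ⋆ₗ truncatedRieszKernel n δ R) x := by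
    rw [lconvolution_def, ← lintegral_indicator measurableSet_ball]
    refine lintegral_congr fun y ↦ ?_
    have hdist : ‖-y + x‖ = dist x y := by rw [neg_add_eq_sub, dist_eq_norm]
    by_cases hy : y ∈ ball x R
    · have hy' : -y + x ∈ ball (0 : EuclideanSpace ℝ (Fin n)) R := by
        rwa [mem_ball_zero_iff, hdist, ← mem_ball']
      rw [indicator_of_mem hy, truncatedRieszKernel, indicator_of_mem hy', hdist,
        enorm_div_rpow _ dist_nonneg, neg_sub]
    · have hy' : -y + x ∉ ball (0 : EuclideanSpace ℝ (Fin n)) R := by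
        rwa [mem_ball_zero_iff, hdist, ← mem_ball']
      rw [indicator_of_notMem hy, truncatedRieszKernel, indicator_of_notMem hy', mul_zero]
  have hfar : ∫⁻ y in (ball x R)ᶜ, ‖f y / dist x y ^ ((n : ℝ) - δ)‖ₑ ≤
      ENNReal.ofReal (R ^ (δ - n)) * ∫⁻ y, ‖f y‖ₑ := by
    calc ∫⁻ y in (ball x R)ᶜ, ‖f y / dist x y ^ ((n : ℝ) - δ)‖ₑ
        ≤ ∫⁻ y in (ball x R)ᶜ, ‖f y‖ₑ * ENNReal.ofReal (R ^ (δ - n)) := by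
          refine lintegral_mono_ae (ae_restrict_of_forall_mem measurableSet_ball.compl ?_)
          intro y hy
          rw [enorm_div_rpow _ dist_nonneg, neg_sub]
          refine mul_le_mul_right (ofReal_le_ofReal ?_) _
          exact Real.rpow_le_rpow_of_nonpos hR (not_lt.1 (by rwa [mem_compl_iff, mem_ball'] at hy))
            (by linarith)
      _ ≤ ∫⁻ y, ‖f y‖ₑ * ENNReal.ofReal (R ^ (δ - n)) := setLIntegral_le_lintegral _ _
      _ = ENNReal.ofReal (R ^ (δ - n)) * ∫⁻ y, ‖f y‖ₑ := by
          rw [lintegral_mul_const' _ _ ofReal_ne_top, mul_comm]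
  calc ‖rieszPotential δ f x‖ₑ ≤ ∫⁻ y, ‖f y / dist x y ^ ((n : ℝ) - δ)‖ₑ :=
        enorm_integral_le_lintegral_enorm _
    _ = (∫⁻ y in ball x R, ‖f y / dist x y ^ ((n : ℝ) - δ)‖ₑ) +
          ∫⁻ y in (ball x R)ᶜ, ‖f y / dist x y ^ ((n : ℝ) - δ)‖ₑ :=
        (lintegral_add_compl _ measurableSet_ball).symm
    _ ≤ _ := add_le_add hnear.le hfar

theorem volume_lt_abs_rieszPotential_le {f : EuclideanSpace ℝ (Fin n) → ℝ} (hf : Integrable f)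
    (hδ : 0 < δ) (hδn : δ < n) {t R : ℝ} (ht : 0 < t) (hR : 0 < R)
    (hRt : R ^ (δ - n) * ∫ y, |f y| ≤ t / 2) :
    volume {x | t < |rieszPotential δ f x|} ≤
      ENNReal.ofReal (2 / t * (∫ y, |f y|) * R ^ δ * rieszKernelUnitBallIntegral n δ) := by
  have hn : 1 ≤ n := by exact_mod_cast hδ.trans hδn
  have hnorm : ∫⁻ y, ‖f y‖ₑ = ENNReal.ofReal (∫ y, |f y|) := by
    simpa only [Real.norm_eq_abs] using (ofReal_integral_norm_eq_lintegral_enorm hf).symm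
  set G := (‖f ·‖ₑ) ⋆ₗ truncatedRieszKernel n δ R
  have hK : AEMeasurable (truncatedRieszKernel n δ R) :=
    ((measurable_norm.pow_const _).ennreal_ofReal.indicator measurableSet_ball).aemeasurable
  have hG : ∫⁻ x, G x =
      ENNReal.ofReal (∫ y, |f y|) * ENNReal.ofReal (R ^ δ * rieszKernelUnitBallIntegral n δ) := by
    have hball := lintegral_ball_norm_rpow (volume : Measure (EuclideanSpace ℝ (Fin n)))
      (by simpa using hn) hδ hR
    rw [finrank_euclideanSpace_fin] at hball
    unfold rieszKernelUnitBallIntegral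
    rw [lintegral_lconvolution hf.1.enorm hK, hnorm, truncatedRieszKernel,
      lintegral_indicator measurableSet_ball, hball]
  have hsub : {x | t < |rieszPotential δ f x|} ⊆ {x | ENNReal.ofReal (t / 2) ≤ G x} := by
    intro x hx
    have hlt : ENNReal.ofReal (t / 2) + ENNReal.ofReal (t / 2) < G x + ENNReal.ofReal (t / 2) :=
      calc ENNReal.ofReal (t / 2) + ENNReal.ofReal (t / 2) = ENNReal.ofReal t := by
            rw [← ofReal_add (by positivity) (by positivity), add_halves]
        _ < ‖rieszPotential δ f x‖ₑ := by
            rw [Real.enorm_eq_ofReal_abs]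
            exact (ofReal_lt_ofReal_iff_of_nonneg ht.le).2 hx
        _ ≤ G x + ENNReal.ofReal (R ^ (δ - n)) * ∫⁻ y, ‖f y‖ₑ :=
            enorm_rieszPotential_le f hδn.le hR x
        _ ≤ G x + ENNReal.ofReal (t / 2) := by
            rw [hnorm, ← ofReal_mul (by positivity)]
            gcongr
    exact (lt_of_add_lt_add_right hlt).le
  calc volume {x | t < |rieszPotential δ f x|}
      ≤ volume {x | ENNReal.ofReal (t / 2) ≤ G x} := measure_mono hsub
    _ ≤ (∫⁻ x, G x) / ENNReal.ofReal (t / 2) :=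
        meas_ge_le_lintegral_div (aemeasurable_lconvolution hf.1.enorm hK)
          (by simpa using ht) ofReal_ne_top
    _ = _ := by
        rw [hG, ← ofReal_mul (by positivity), ← ofReal_div_of_pos (by positivity)]
        congr 1
        field_simp

theorem volume_lt_abs_rieszPotential_mul_rpow_le {f : EuclideanSpace ℝ (Fin n) → ℝ}
    (hf : Integrable f) (hδ : 0 < δ) (hδn : δ < n) {t : ℝ} (ht : 0 < t) :
    volume {x | t < |rieszPotential δ f x|} * ENNReal.ofReal (t ^ ((n : ℝ) / ((n : ℝ) - δ))) ≤
      ENNReal.ofReal (2 ^ ((n : ℝ) / ((n : ℝ) - δ)) * rieszKernelUnitBallIntegral n δ) *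
      ENNReal.ofReal (∫ y, |f y|) ^ ((n : ℝ) / ((n : ℝ) - δ)) := by
  have hs : 0 < (n : ℝ) - δ := by linarith
  set p := (n : ℝ) / ((n : ℝ) - δ)
  set c := rieszKernelUnitBallIntegral n δ
  have hc : 0 ≤ c := rieszKernelUnitBallIntegral_nonneg
  set L := ∫ y, |f y|
  obtain hL | hL := (integral_nonneg fun y ↦ abs_nonneg (f y) : 0 ≤ L).eq_or_lt
  · have hzero := volume_lt_abs_rieszPotential_le hf hδ hδn ht one_pos
      (by rw [← hL, mul_zero]; positivity)
    simp only [← hL, mul_zero, zero_mul, ofReal_zero, nonpos_iff_eq_zero] at hzero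
    rw [hzero, zero_mul]
    exact zero_le
  have hL0 : L ≠ 0 := hL.ne'
  set u := 2 * L / t
  have hu : 0 < u := by positivity
  set R := u ^ ((n : ℝ) - δ)⁻¹
  have hRs : R ^ (δ - n) = u⁻¹ := by
    rw [← neg_sub, Real.rpow_neg (by positivity), Real.rpow_inv_rpow hu.le hs.ne']
  have hbound := volume_lt_abs_rieszPotential_le hf hδ hδn ht (by positivity)
    (le_of_eq (by simp only [hRs, u, inv_div]; field_simp) : R ^ (δ - n) * L ≤ t / 2)
  have hp : p = 1 + δ / ((n : ℝ) - δ) := by simp only [p]; field_simp; ring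
  have hut : u * t = 2 * L := by simp only [u]; field_simp
  calc volume {x | t < |rieszPotential δ f x|} * ENNReal.ofReal (t ^ p)
      ≤ ENNReal.ofReal (2 / t * L * R ^ δ * c) * ENNReal.ofReal (t ^ p) := by gcongr
    _ = ENNReal.ofReal (2 ^ p * c * L ^ p) := by
        rw [← ofReal_mul (by positivity)]
        congr 1
        calc 2 / t * L * R ^ δ * c * t ^ p = u * u ^ (δ / ((n : ℝ) - δ)) * c * t ^ p := by
              rw [← Real.rpow_mul hu.le, inv_mul_eq_div]; ring
          _ = c * (u * t) ^ p := by
              rw [Real.mul_rpow hu.le ht.le, hp, Real.rpow_add hu, Real.rpow_one]; ring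
          _ = 2 ^ p * c * L ^ p := by
              rw [hut, Real.mul_rpow zero_le_two hL.le]; ring
    _ = ENNReal.ofReal (2 ^ p * c) * ENNReal.ofReal L ^ p := by
        rw [ofReal_mul (by positivity), ofReal_rpow_of_nonneg hL.le (by positivity)]

end RieszPotential

/-- Theorem 2.4 (weak type estimate for the Riesz potential): for `0 < δ < n` there is
`C = C(n, δ) > 0` with
`sup_{t>0} |{x : |I_δ f (x)| > t}| · t^{n/(n−δ)} ≤ C ‖f‖₁^{n/(n−δ)}` for all `f ∈ L¹(ℝⁿ)`. -/
theorem riesz_potential_weak_type {n : ℕ} {δ : ℝ} (hδ0 : 0 < δ) (hδn : δ < n) :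
    ∃ C : ℝ, 0 < C ∧ ∀ f : EuclideanSpace ℝ (Fin n) → ℝ, Integrable f volume →
      ∀ t : ℝ, 0 < t →
        volume {x : EuclideanSpace ℝ (Fin n) | t < |rieszPotential δ f x|} *
            ENNReal.ofReal (t ^ ((n : ℝ) / ((n : ℝ) - δ))) ≤
          ENNReal.ofReal C *
            (ENNReal.ofReal (∫ y, |f y|)) ^ ((n : ℝ) / ((n : ℝ) - δ)) := by
  have hc : 0 ≤ rieszKernelUnitBallIntegral n δ := rieszKernelUnitBallIntegral_nonneg
  refine ⟨2 ^ ((n : ℝ) / ((n : ℝ) - δ)) * rieszKernelUnitBallIntegral n δ + 1, by positivity,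
    fun f hf t ht ↦ (volume_lt_abs_rieszPotential_mul_rpow_le hf hδ0 hδn ht).trans ?_⟩
  gcongr
  linarith
end

section
/- Let 1 ≤ p < ∞ and 0 < δ < 1 with pδ ≥ 1. Let G = (−1,1)² \ ((0,1) × {0}) ⊂ ℝ², and define u : G → [0,1] by u(x) = x₁ for x ∈ (0,1)² and u(x) = 0 otherwise. Then ∫_G ∫_G |u(x) − u(y)|^p / |x − y|^{2+δp} dy dx = ∞. -/
open MeasureTheory Metric Set ENNReal

/-- The slit square `G = (−1,1)² \ ((0,1) × {0}) ⊆ ℝ²`. -/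
def slitSquare : Set (EuclideanSpace ℝ (Fin 2)) :=
  {x | x 0 ∈ Set.Ioo (-1 : ℝ) 1 ∧ x 1 ∈ Set.Ioo (-1 : ℝ) 1} \
    {x | x 0 ∈ Set.Ioo (0 : ℝ) 1 ∧ x 1 = 0}

/-- The function `u(x) = x₁` on `(0,1)²` and `u = 0` otherwise. -/
noncomputable def slitFunction (x : EuclideanSpace ℝ (Fin 2)) : ℝ :=
  if x 0 ∈ Set.Ioo (0 : ℝ) 1 ∧ x 1 ∈ Set.Ioo (0 : ℝ) 1 then x 0 else 0

/-!
Points `x ∈ (0,1)²` with `x₁ ≥ 1/2` at height `t = x₂` above the slit see, just below the slit, a square of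
side `t` at distance at most `3t` on which `u` vanishes while `u(x) = x₁ ≥ 1/2`. Hence the inner
integral is at least `c · t² / t^(2+δp) = c · t^(-δp)`, which is not integrable in `t` near `0`
because `δp ≥ 1`.
-/

lemma lintegral_Ioo_rpow_eq_top {a s : ℝ} (ha : 0 < a) (hs : s ≤ -1) :
    ∫⁻ t in Ioo 0 a, ENNReal.ofReal (t ^ s) = ∞ := by
  by_contra h
  have hint : IntegrableOn (fun t : ℝ => t ^ s) (Ioo 0 a) := by
    refine ⟨(measurable_id.pow_const s).aestronglyMeasurable, ?_⟩
    rw [hasFiniteIntegral_iff_ofReal]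
    · exact lt_top_iff_ne_top.2 h
    · filter_upwards [ae_restrict_mem measurableSet_Ioo] with t ht
      exact Real.rpow_nonneg ht.1.le s
  rw [intervalIntegral.integrableOn_Ioo_rpow_iff ha] at hint
  linarith

namespace EuclideanSpace

lemma dist_le_abs_add_abs (x y : EuclideanSpace ℝ (Fin 2)) :
    dist x y ≤ |x 0 - y 0| + |x 1 - y 1| := by
  rw [EuclideanSpace.dist_eq, Fin.sum_univ_two, Real.dist_eq, Real.dist_eq]
  refine Real.sqrt_le_iff.2 ⟨by positivity, ?_⟩
  nlinarith [sq_abs (x 0 - y 0), sq_abs (x 1 - y 1), abs_nonneg (x 0 - y 0),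
    abs_nonneg (x 1 - y 1)]

noncomputable def planeCoords : EuclideanSpace ℝ (Fin 2) ≃ᵐ ℝ × ℝ :=
  (MeasurableEquiv.toLp 2 (Fin 2 → ℝ)).symm.trans (MeasurableEquiv.finTwoArrow)

lemma volume_preserving_planeCoords : MeasurePreserving planeCoords :=
  (volume_preserving_finTwoArrow ℝ).comp (volume_preserving_symm_measurableEquiv_toLp (Fin 2))

def planeRect (a b c d : ℝ) : Set (EuclideanSpace ℝ (Fin 2)) :=
  {x | x 0 ∈ Ioo a b ∧ x 1 ∈ Ioo c d}

lemma measurableSet_planeRect (a b c d : ℝ) : MeasurableSet (planeRect a b c d) :=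
  planeCoords.measurable (measurableSet_Ioo.prod measurableSet_Ioo)

lemma setLIntegral_planeRect_comp_snd {f : ℝ → ℝ≥0∞} (hf : Measurable f) (a b c d : ℝ) :
    ∫⁻ x in planeRect a b c d, f (x 1) = ENNReal.ofReal (b - a) * ∫⁻ t in Ioo c d, f t := by
  refine (volume_preserving_planeCoords.setLIntegral_comp_preimage_emb
    planeCoords.measurableEmbedding (fun z => f z.2) (Ioo a b ×ˢ Ioo c d)).trans ?_
  rw [Measure.volume_eq_prod, ← Measure.prod_restrict,
    lintegral_prod (fun z : ℝ × ℝ => f z.2) (hf.comp measurable_snd).aemeasurable]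
  simp only [setLIntegral_const, Real.volume_Ioo]
  exact mul_comm _ _

lemma volume_planeRect (a b c d : ℝ) :
    volume (planeRect a b c d) = ENNReal.ofReal (b - a) * ENNReal.ofReal (d - c) := by
  simpa [Real.volume_Ioo] using setLIntegral_planeRect_comp_snd (f := fun _ => 1)
    measurable_const a b c d

end EuclideanSpace

open EuclideanSpace

noncomputable def gagliardoIntegrand {X : Type*} [PseudoMetricSpace X] (f : X → ℝ) (p s : ℝ)
    (x y : X) : ℝ≥0∞ :=
  ENNReal.ofReal (|f x - f y| ^ p / dist x y ^ s)

lemma planeRect_subset_slitSquare {a b c d : ℝ} (ha : -1 ≤ a) (hb : b ≤ 1) (hc : -1 ≤ c)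
    (hd : d ≤ 1) (hslit : d ≤ 0 ∨ 0 ≤ c) : planeRect a b c d ⊆ slitSquare := by
  rintro x ⟨⟨hx0a, hx0b⟩, hx1c, hx1d⟩
  refine ⟨⟨⟨by linarith, by linarith⟩, by linarith, by linarith⟩, fun hslitx => ?_⟩
  rw [hslitx.2] at hx1c hx1d
  rcases hslit with h | h <;> linarith

lemma slitFunction_of_nonpos {x : EuclideanSpace ℝ (Fin 2)} (hx : x 1 ≤ 0) :
    slitFunction x = 0 :=
  if_neg fun h => hx.not_gt h.2.1

def squareBelowSlit (x : EuclideanSpace ℝ (Fin 2)) : Set (EuclideanSpace ℝ (Fin 2)) :=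
  planeRect (x 0) (x 0 + x 1) (-x 1) 0

lemma gagliardoIntegrand_slitFunction_ge {p s : ℝ} (hp : 0 ≤ p) (hs : 0 ≤ s)
    {x y : EuclideanSpace ℝ (Fin 2)} (hx : x ∈ planeRect (1 / 2) (3 / 4) 0 (1 / 4))
    (hy : y ∈ squareBelowSlit x) :
    ENNReal.ofReal ((1 / 2) ^ p / (3 * x 1) ^ s) ≤ gagliardoIntegrand slitFunction p s x y := by
  obtain ⟨⟨hx0, hx0'⟩, hx1, hx1'⟩ := hx
  obtain ⟨⟨hy0, hy0'⟩, hy1, hy1'⟩ := hy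
  have hux : slitFunction x = x 0 := if_pos ⟨⟨by linarith, by linarith⟩, hx1, by linarith⟩
  have hdist_pos : 0 < dist x y := dist_pos.2 fun h => by rw [h] at hx1; linarith
  have hdist_le : dist x y ≤ 3 * x 1 := by
    refine (dist_le_abs_add_abs x y).trans ?_
    have h0 : |x 0 - y 0| ≤ x 1 := abs_le.2 ⟨by linarith, by linarith⟩
    have h1 : |x 1 - y 1| ≤ 2 * x 1 := abs_le.2 ⟨by linarith, by linarith⟩
    linarith
  apply ENNReal.ofReal_le_ofReal
  rw [hux, slitFunction_of_nonpos hy1'.le, sub_zero, abs_of_pos (by linarith : (0:ℝ) < x 0)]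
  exact div_le_div₀ (by positivity) (Real.rpow_le_rpow (by norm_num) hx0.le hp)
    (Real.rpow_pos_of_pos hdist_pos _) (Real.rpow_le_rpow dist_nonneg hdist_le hs)

lemma setLIntegral_planeRect_rpow_snd_eq_top {a b c C s : ℝ} (hab : a < b) (hc : 0 < c)
    (hC : 0 < C) (hs : s ≤ -1) :
    ∫⁻ x in planeRect a b 0 c, ENNReal.ofReal (C * x 1 ^ s) = ∞ := by
  have hpow : Measurable fun t : ℝ => ENNReal.ofReal (t ^ s) := by fun_prop
  simp_rw [ENNReal.ofReal_mul hC.le]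
  rw [setLIntegral_planeRect_comp_snd (hpow.const_mul _), lintegral_const_mul _ hpow,
    lintegral_Ioo_rpow_eq_top hc hs]
  simp [hab, hC]

lemma lintegral_gagliardoIntegrand_slitFunction_ge {p s : ℝ} (hp : 0 ≤ p) (hs : 0 ≤ s)
    {x : EuclideanSpace ℝ (Fin 2)} (hx : x ∈ planeRect (1 / 2) (3 / 4) 0 (1 / 4)) :
    ENNReal.ofReal ((1 / 2) ^ p / 3 ^ s * x 1 ^ (2 - s)) ≤
      ∫⁻ y in slitSquare, gagliardoIntegrand slitFunction p s x y := by
  obtain ⟨⟨hx0, hx0'⟩, hx1, hx1'⟩ := id hx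
  have hscale :
      (1 / 2) ^ p / 3 ^ s * x 1 ^ (2 - s) = (1 / 2) ^ p / (3 * x 1) ^ s * (x 1 * x 1) := by
    rw [Real.mul_rpow (by norm_num) hx1.le, Real.rpow_sub hx1, Real.rpow_two]
    field_simp
  calc ENNReal.ofReal ((1 / 2) ^ p / 3 ^ s * x 1 ^ (2 - s))
      = ENNReal.ofReal ((1 / 2) ^ p / (3 * x 1) ^ s) * volume (squareBelowSlit x) := by
        rw [squareBelowSlit, volume_planeRect, add_sub_cancel_left, zero_sub, neg_neg, hscale,
          ENNReal.ofReal_mul (by positivity), ENNReal.ofReal_mul hx1.le]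
    _ = ∫⁻ _ in squareBelowSlit x, ENNReal.ofReal ((1 / 2) ^ p / (3 * x 1) ^ s) :=
        (setLIntegral_const _ _).symm
    _ ≤ ∫⁻ y in squareBelowSlit x, gagliardoIntegrand slitFunction p s x y :=
        setLIntegral_mono' (measurableSet_planeRect _ _ _ _) fun _ hy =>
          gagliardoIntegrand_slitFunction_ge hp hs hx hy
    _ ≤ ∫⁻ y in slitSquare, gagliardoIntegrand slitFunction p s x y :=
        lintegral_mono_set <| planeRect_subset_slitSquare (by linarith) (by linarith)
          (by linarith) zero_le_one (Or.inl le_rfl)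

theorem slitSquare_full_seminorm_infinite_general
    {p δ : ℝ} (hp : 1 ≤ p) (hpδ : 1 ≤ p * δ) :
    (∫⁻ x in slitSquare, ∫⁻ y in slitSquare,
        ENNReal.ofReal
          (|slitFunction x - slitFunction y| ^ p / dist x y ^ ((2 : ℝ) + δ * p))) = ∞ := by
  set s : ℝ := 2 + δ * p
  have hs : 0 ≤ s := by linarith
  have hdecay : 2 - s ≤ -1 := by linarith
  let A := planeRect (1 / 2) (3 / 4) 0 (1 / 4)
  have hA : A ⊆ slitSquare :=
    planeRect_subset_slitSquare (by norm_num) (by norm_num) (by norm_num) (by norm_num)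
      (Or.inr le_rfl)
  refine top_le_iff.1 ?_
  calc ∞ = ∫⁻ x in A, ENNReal.ofReal ((1 / 2) ^ p / 3 ^ s * x 1 ^ (2 - s)) :=
        (setLIntegral_planeRect_rpow_snd_eq_top (by norm_num) (by norm_num) (by positivity)
          hdecay).symm
    _ ≤ ∫⁻ x in A, ∫⁻ y in slitSquare, gagliardoIntegrand slitFunction p s x y :=
        setLIntegral_mono' (measurableSet_planeRect _ _ _ _) fun _ hx =>
          lintegral_gagliardoIntegrand_slitFunction_ge (by linarith) hs hx
    _ ≤ ∫⁻ x in slitSquare, ∫⁻ y in slitSquare, gagliardoIntegrand slitFunction p s x y :=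
        lintegral_mono_set hA

/-- On the slit square, the full fractional seminorm of `slitFunction` is infinite
whenever `1 ≤ p < ∞`, `0 < δ < 1` and `pδ ≥ 1`. -/
theorem slitSquare_full_seminorm_infinite
    {p δ : ℝ} (hp : 1 ≤ p) (hδ : δ ∈ Set.Ioo (0 : ℝ) 1) (hpδ : 1 ≤ p * δ) :
    (∫⁻ x in slitSquare, ∫⁻ y in slitSquare,
        ENNReal.ofReal
          (|slitFunction x - slitFunction y| ^ p / dist x y ^ ((2 : ℝ) + δ * p))) = ∞ :=
  slitSquare_full_seminorm_infinite_general hp hpδ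
end

section
/- Let G = (−1,1)² \ ((0,1) × {0}) ⊂ ℝ², and define u : G → [0,1] by u(x) = x₁ for x ∈ (0,1)² and u(x) = 0 otherwise. Then for every x ∈ G and every y ∈ G with |x − y| < dist(x, ∂G), one has |u(x) − u(y)| ≤ |x − y|; consequently, for every 1 ≤ p < ∞ and 0 < δ < 1, ∫_G ∫_{B(x, dist(x,∂G))} |u(x) − u(y)|^p / |x − y|^{2+δp} dy dx < ∞. -/
/-!
Coordinates are numbered from `0` in Lean, so the paper's `x₁` is `x 0`.

Inside the ball `B(x, dist(x, ∂G))` the function `u` is `1`-Lipschitz. If `x ∈ (0,1)²` and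
`y ∉ (0,1)²`, then `y₁ ≤ 0`: otherwise the foot of the perpendicular from `x` to the side that
`y` lies beyond (`x₁ = 1`, `x₂ = 0` or `x₂ = 1`) is a point of `∂G` at most `|x - y|` away.
Hence `|u x - u y| = x₁ ≤ x₁ - y₁`. Symmetrically, if `x ∉ (0,1)²` and `y ∈ (0,1)²`, then
`x₁ ≤ 0`, since a point of `G` outside the square with `x₁ ∈ (0,1)` lies below the slit.
So the integrand is at most `|x - y| ^ (p - 2 - δ p)`, an exponent `> -2`: it is integrable
over balls of bounded radius uniformly in the centre, and `G` has finite measure.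
-/

open MeasureTheory Metric Set ENNReal

theorem setLIntegral_ball_dist_rpow_eq {E : Type*} [NormedAddCommGroup E] [MeasurableSpace E]
    [BorelSpace E] (μ : Measure E) [μ.IsAddLeftInvariant] (x : E) (r β : ℝ) :
    ∫⁻ y in ball x r, ENNReal.ofReal (dist x y ^ β) ∂μ =
      ∫⁻ z in ball 0 r, ENNReal.ofReal (‖z‖ ^ β) ∂μ := by
  rw [← (measurePreserving_add_left μ x).setLIntegral_comp_preimage_emb
    (measurableEmbedding_addLeft x)]
  simp [dist_self_add_right]

theorem setLIntegral_ball_norm_rpow_lt_top {E : Type*} [NormedAddCommGroup E] [NormedSpace ℝ E]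
    [FiniteDimensional ℝ E] [Nontrivial E] [MeasurableSpace E] [BorelSpace E]
    (μ : Measure E) [μ.IsAddHaarMeasure] {β : ℝ}
    (hβ : -(Module.finrank ℝ E : ℝ) < β) (r : ℝ) :
    ∫⁻ z in ball 0 r, ENNReal.ofReal (‖z‖ ^ β) ∂μ < ∞ := by
  refine IntegrableOn.setLIntegral_lt_top (integrableOn_ball_of_norm_le_rpow
    Module.finrank_pos (α := -β) (C := 1) (by linarith) ?_
    (measurable_norm.pow_const β).aestronglyMeasurable)
  exact Filter.Eventually.of_forall fun z => by
    simp [abs_of_nonneg (Real.rpow_nonneg (norm_nonneg z) _)]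

theorem Real.rpow_div_rpow_le_rpow_sub {b d p s : ℝ} (hb : 0 ≤ b) (hbd : b ≤ d) (hp : 0 < p) :
    b ^ p / d ^ s ≤ d ^ (p - s) := by
  rcases (hb.trans hbd).eq_or_lt with rfl | hd
  · obtain rfl : b = 0 := le_antisymm hbd hb
    simpa [Real.zero_rpow hp.ne'] using Real.rpow_nonneg le_rfl _
  · rw [Real.rpow_sub hd]
    gcongr

open Module in
theorem improvedFracSeminorm_lt_top_of_abs_sub_le_dist {E : Type*} [NormedAddCommGroup E]
    [NormedSpace ℝ E] [FiniteDimensional ℝ E] [Nontrivial E] [MeasurableSpace E] [BorelSpace E]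
    (μ : Measure E) [μ.IsAddHaarMeasure] {S : Set E} (hSm : MeasurableSet S) (hS : μ S < ∞)
    {u ρ : E → ℝ} {R : ℝ} (hρ : ∀ x ∈ S, ρ x ≤ R)
    (hu : ∀ x ∈ S, ∀ y ∈ ball x (ρ x), |u x - u y| ≤ dist x y) {p δ : ℝ} (hp : 0 < p)
    (hδ : δ < 1) :
    ∫⁻ x in S, ∫⁻ y in ball x (ρ x),
      ENNReal.ofReal (|u x - u y| ^ p / dist x y ^ ((finrank ℝ E : ℝ) + δ * p)) ∂μ ∂μ < ∞ := by
  set β := p - ((finrank ℝ E : ℝ) + δ * p)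
  set K := ∫⁻ z in ball 0 R, ENNReal.ofReal (‖z‖ ^ β) ∂μ
  have hK : K < ∞ := setLIntegral_ball_norm_rpow_lt_top μ (by nlinarith) R
  have hinner : ∀ x ∈ S, ∫⁻ y in ball x (ρ x),
      ENNReal.ofReal (|u x - u y| ^ p / dist x y ^ ((finrank ℝ E : ℝ) + δ * p)) ∂μ ≤ K :=
    fun x hx => calc
      _ ≤ ∫⁻ y in ball x (ρ x), ENNReal.ofReal (dist x y ^ β) ∂μ :=
        setLIntegral_mono' measurableSet_ball fun y hy => ENNReal.ofReal_le_ofReal <|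
          Real.rpow_div_rpow_le_rpow_sub (abs_nonneg _) (hu x hx y hy) hp
      _ ≤ ∫⁻ y in ball x R, ENNReal.ofReal (dist x y ^ β) ∂μ :=
        lintegral_mono_set (ball_subset_ball (hρ x hx))
      _ = K := setLIntegral_ball_dist_rpow_eq μ x R β
  calc _ ≤ ∫⁻ _ in S, K ∂μ := setLIntegral_mono' hSm hinner
    _ = K * μ S := setLIntegral_const S K
    _ < ∞ := ENNReal.mul_lt_top hK hS

namespace EuclideanSpace

theorem abs_apply_sub_le_dist {ι : Type*} [Fintype ι] (x y : EuclideanSpace ℝ ι) (i : ι) :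
    |x i - y i| ≤ dist x y := by
  simpa [Real.dist_eq] using PiLp.dist_apply_le x y i

theorem dist_eq_abs_sub_apply_zero {x y : EuclideanSpace ℝ (Fin 2)} (h : x 1 = y 1) :
    dist x y = |x 0 - y 0| := by
  simp [EuclideanSpace.dist_eq, Fin.sum_univ_two, Real.dist_eq, h, Real.sqrt_sq_eq_abs]

theorem dist_eq_abs_sub_apply_one {x y : EuclideanSpace ℝ (Fin 2)} (h : x 0 = y 0) :
    dist x y = |x 1 - y 1| := by
  simp [EuclideanSpace.dist_eq, Fin.sum_univ_two, Real.dist_eq, h, Real.sqrt_sq_eq_abs]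

end EuclideanSpace

open EuclideanSpace

def openUnitSquare : Set (EuclideanSpace ℝ (Fin 2)) :=
  {x | x 0 ∈ Ioo (0 : ℝ) 1 ∧ x 1 ∈ Ioo (0 : ℝ) 1}

theorem slitFunction_eq_indicator : slitFunction = openUnitSquare.indicator (· 0) := by
  ext x
  simp [slitFunction, openUnitSquare, indicator_apply]

theorem measurableSet_slitSquare : MeasurableSet slitSquare := by
  unfold slitSquare
  measurability

theorem slitSquare_subset_ball : slitSquare ⊆ ball 0 2 := by
  rintro x ⟨⟨⟨h00, h01⟩, h10, h11⟩, -⟩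
  rw [mem_ball_zero_iff, EuclideanSpace.norm_eq, Fin.sum_univ_two, Real.sqrt_lt' two_pos]
  simp only [Real.norm_eq_abs, sq_abs]
  nlinarith

theorem openUnitSquare_subset_slitSquare : openUnitSquare ⊆ slitSquare := by
  rintro x ⟨⟨h00, h01⟩, h10, h11⟩
  exact ⟨⟨⟨by linarith, h01⟩, ⟨by linarith, h11⟩⟩, fun h => h10.ne' h.2⟩

theorem openSegment_subset_openUnitSquare {z : EuclideanSpace ℝ (Fin 2)}
    (h0 : z 0 ∈ Icc (0 : ℝ) 1) (h1 : z 1 ∈ Icc (0 : ℝ) 1) :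
    openSegment ℝ z !₂[1/2, 1/2] ⊆ openUnitSquare := by
  rintro w ⟨a, b, ha, hb, hab, rfl⟩
  simp only [openUnitSquare, mem_ofPred_eq, PiLp.add_apply, PiLp.smul_apply, smul_eq_mul,
    mem_Ioo, Matrix.cons_val_zero, Matrix.cons_val_one]
  constructor <;> constructor <;> nlinarith [h0.1, h0.2, h1.1, h1.2]

theorem mem_frontier_slitSquare {z : EuclideanSpace ℝ (Fin 2)}
    (h0 : z 0 ∈ Icc (0 : ℝ) 1) (h1 : z 1 ∈ Icc (0 : ℝ) 1) (hz : z ∉ slitSquare) :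
    z ∈ frontier slitSquare := by
  refine ⟨?_, fun h => hz (interior_subset h)⟩
  have hseg := (openSegment_subset_openUnitSquare h0 h1).trans openUnitSquare_subset_slitSquare
  exact closure_mono hseg (segment_subset_closure_openSegment (left_mem_segment ℝ _ _))

theorem infDist_frontier_slitSquare_le {x : EuclideanSpace ℝ (Fin 2)} (hx : x ∈ slitSquare) :
    infDist x (frontier slitSquare) ≤ 4 := by
  have hz : !₂[1/2, 0] ∈ frontier slitSquare :=
    mem_frontier_slitSquare (by norm_num) (by norm_num) (by norm_num [slitSquare])
  have hz2 : !₂[1/2, 0] ∈ closedBall (0 : EuclideanSpace ℝ (Fin 2)) 2 :=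
    closure_ball_subset_closedBall <|
      closure_mono slitSquare_subset_ball (frontier_subset_closure hz)
  have hx2 := slitSquare_subset_ball hx
  rw [mem_ball] at hx2
  rw [mem_closedBall] at hz2
  calc infDist x (frontier slitSquare) ≤ dist x !₂[1/2, 0] := infDist_le_dist_of_mem hz
    _ ≤ dist x 0 + dist !₂[1/2, 0] 0 := dist_triangle_right _ _ _
    _ ≤ 4 := by linarith

theorem apply_zero_le_dist_of_mem_openUnitSquare {x y : EuclideanSpace ℝ (Fin 2)}
    (hx : x ∈ openUnitSquare) (hy : y ∉ openUnitSquare)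
    (h : dist x y < infDist x (frontier slitSquare)) : x 0 ≤ dist x y := by
  obtain ⟨⟨hx00, hx01⟩, hx10, hx11⟩ := hx
  have hfr : ∀ z ∈ frontier slitSquare, dist x y < dist x z :=
    fun z hz => h.trans_le (infDist_le_dist_of_mem hz)
  have hd0 := abs_le.mp (abs_apply_sub_le_dist x y 0)
  have hd1 := abs_le.mp (abs_apply_sub_le_dist x y 1)
  by_contra! hlt
  simp only [openUnitSquare, mem_ofPred_eq, mem_Ioo, not_and_or, not_lt] at hy
  rcases hy with (hy0 | hy0) | (hy1 | hy1)
  · linarith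
  · have hz := hfr !₂[1, x 1] <| mem_frontier_slitSquare (by norm_num)
      (by simp; constructor <;> linarith) (by simp [slitSquare])
    rw [dist_eq_abs_sub_apply_zero (y := !₂[1, x 1]) (by simp)] at hz
    simp only [Matrix.cons_val_zero, abs_of_neg (sub_neg.2 hx01), neg_sub] at hz
    linarith
  · have hz := hfr !₂[x 0, 0] <| mem_frontier_slitSquare (by simp; constructor <;> linarith)
      (by norm_num) (by simp [slitSquare]; intros; constructor <;> linarith)
    rw [dist_eq_abs_sub_apply_one (y := !₂[x 0, 0]) (by simp)] at hz
    simp only [Matrix.cons_val_one, Matrix.cons_val_fin_one, sub_zero, abs_of_pos hx10] at hz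
    linarith
  · have hz := hfr !₂[x 0, 1] <| mem_frontier_slitSquare (by simp; constructor <;> linarith)
      (by norm_num) (by simp [slitSquare])
    rw [dist_eq_abs_sub_apply_one (y := !₂[x 0, 1]) (by simp)] at hz
    simp only [Matrix.cons_val_one, Matrix.cons_val_fin_one, abs_of_neg (sub_neg.2 hx11),
      neg_sub] at hz
    linarith

theorem apply_zero_le_dist_of_notMem_openUnitSquare {x y : EuclideanSpace ℝ (Fin 2)}
    (hx : x ∈ slitSquare) (hxQ : x ∉ openUnitSquare) (hy : y ∈ openUnitSquare)
    (h : dist x y < infDist x (frontier slitSquare)) : y 0 ≤ dist x y := by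
  obtain ⟨⟨⟨hx00, hx01⟩, hx10, hx11⟩, hxs⟩ := hx
  have hd0 := abs_le.mp (abs_apply_sub_le_dist x y 0)
  have hd1 := abs_le.mp (abs_apply_sub_le_dist x y 1)
  rcases le_or_gt (x 0) 0 with hx0 | hx0
  · linarith
  have hx1 : x 1 < 0 := by
    simp only [openUnitSquare, mem_ofPred_eq, mem_Ioo, not_and_or, not_lt] at hxQ
    simp only [mem_ofPred_eq, mem_Ioo, not_and] at hxs
    have := hxs ⟨hx0, hx01⟩
    rcases hxQ with (h | h) | (h | h) <;> first | linarith | exact lt_of_le_of_ne h this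
  have hz : !₂[x 0, 0] ∈ frontier slitSquare :=
    mem_frontier_slitSquare (by simp; constructor <;> linarith) (by norm_num)
      (by simp [slitSquare]; intros; constructor <;> linarith)
  have hlt := h.trans_le (infDist_le_dist_of_mem hz)
  rw [dist_eq_abs_sub_apply_one (y := !₂[x 0, 0]) (by simp)] at hlt
  simp only [Matrix.cons_val_one, Matrix.cons_val_fin_one, sub_zero, abs_of_neg hx1] at hlt
  linarith [hy.2.1]

theorem abs_slitFunction_sub_le_dist {x y : EuclideanSpace ℝ (Fin 2)} (hx : x ∈ slitSquare)
    (h : dist x y < infDist x (frontier slitSquare)) :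
    |slitFunction x - slitFunction y| ≤ dist x y := by
  rw [slitFunction_eq_indicator]
  by_cases hxQ : x ∈ openUnitSquare <;> by_cases hyQ : y ∈ openUnitSquare
  · simp only [indicator_of_mem hxQ, indicator_of_mem hyQ]
    exact abs_apply_sub_le_dist x y 0
  · simp only [indicator_of_mem hxQ, indicator_of_notMem hyQ, sub_zero, abs_of_pos hxQ.1.1]
    exact apply_zero_le_dist_of_mem_openUnitSquare hxQ hyQ h
  · simp only [indicator_of_notMem hxQ, indicator_of_mem hyQ, zero_sub, abs_neg,
      abs_of_pos hyQ.1.1]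
    exact apply_zero_le_dist_of_notMem_openUnitSquare hx hxQ hyQ h
  · simp only [indicator_of_notMem hxQ, indicator_of_notMem hyQ, sub_zero, abs_zero]
    exact dist_nonneg

/-- On the slit square, `slitFunction` is `1`-Lipschitz inside balls
`B(x, dist(x, ∂G))`; consequently its improved fractional seminorm is finite for all
`1 ≤ p < ∞` and `0 < δ < 1`. -/
theorem slitSquare_improved_seminorm_finite :
    (∀ x ∈ slitSquare, ∀ y ∈ slitSquare,
      dist x y < Metric.infDist x (frontier slitSquare) →
        |slitFunction x - slitFunction y| ≤ dist x y) ∧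
    ∀ p δ : ℝ, 1 ≤ p → δ ∈ Set.Ioo (0 : ℝ) 1 →
      (∫⁻ x in slitSquare,
          ∫⁻ y in Metric.ball x (Metric.infDist x (frontier slitSquare)),
            ENNReal.ofReal
              (|slitFunction x - slitFunction y| ^ p /
                dist x y ^ ((2 : ℝ) + δ * p))) < ∞ := by
  refine ⟨fun x hx y _ h => abs_slitFunction_sub_le_dist hx h, fun p δ hp hδ => ?_⟩
  have hfinite : volume slitSquare < ∞ :=
    (measure_mono slitSquare_subset_ball).trans_lt measure_ball_lt_top
  have hlip : ∀ x ∈ slitSquare, ∀ y ∈ ball x (infDist x (frontier slitSquare)),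
      |slitFunction x - slitFunction y| ≤ dist x y := fun x hx y hy =>
    abs_slitFunction_sub_le_dist hx (by rwa [mem_ball, dist_comm] at hy)
  simpa using improvedFracSeminorm_lt_top_of_abs_sub_le_dist volume measurableSet_slitSquare
    hfinite (fun x hx => infDist_frontier_slitSquare_le hx) hlip (by linarith) hδ.2
end

section
/- Let G be a set, let v : G → [0,∞), and for 0 < t₁ < t₂ < ∞ define the truncation v_{t₁}^{t₂}(x) = t₂ − t₁ if v(x) ≥ t₂, v_{t₁}^{t₂}(x) = v(x) − t₁ if t₁ < v(x) < t₂, and v_{t₁}^{t₂}(x) = 0 if v(x) ≤ t₁. For integers i, j, k with i ≤ k ≤ j, if y, z ∈ G satisfy v(y) ≤ 2^i and 2^{j−1} < v(z) ≤ 2^j (or merely v(y) ≤ 2^i and v(z) > 2^{j−1}) with j − 1 > i, then |v_{2^{k−1}}^{2^k}(y) − v_{2^{k−1}}^{2^k}(z)| ≤ 4 · 2^{k−j} |v(y) − v(z)|. -/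
/-!
The truncation at levels `2^{k-1} < 2^k` takes values in `[0, 2^{k-1}]`, so the left side is at
most `2^k`. On the other hand `v y ≤ 2^i ≤ 2^{j-2}` and `v z > 2^{j-1}` force
`|v y - v z| ≥ 2^{j-2}`, so the right side is at least `4 · 2^{k-j} · 2^{j-2} = 2^k`.
-/

/-- The truncation `v_{t₁}^{t₂}(x) = min (max (v x − t₁) 0) (t₂ − t₁)`. -/
def truncation {α : Type*} (v : α → ℝ) (t₁ t₂ : ℝ) (x : α) : ℝ :=
  min (max (v x - t₁) 0) (t₂ - t₁)

section Truncation

variable {α : Type*} (v : α → ℝ) {t₁ t₂ : ℝ}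

theorem truncation_nonneg (h : t₁ ≤ t₂) (x : α) : 0 ≤ truncation v t₁ t₂ x :=
  le_min (le_max_right _ _) (sub_nonneg.mpr h)

theorem truncation_le (t₁ t₂ : ℝ) (x : α) : truncation v t₁ t₂ x ≤ t₂ - t₁ :=
  min_le_right _ _

theorem abs_truncation_sub_truncation_le (h : t₁ ≤ t₂) (y z : α) :
    |truncation v t₁ t₂ y - truncation v t₁ t₂ z| ≤ t₂ - t₁ :=
  abs_sub_le_of_nonneg_of_le (truncation_nonneg v h y) (truncation_le v t₁ t₂ y)
    (truncation_nonneg v h z) (truncation_le v t₁ t₂ z)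

end Truncation

theorem two_zpow_sub_two_le_abs_sub {a b : ℝ} {i j : ℤ} (hij : i < j - 1)
    (ha : a ≤ (2 : ℝ) ^ i) (hb : (2 : ℝ) ^ (j - 1) < b) : (2 : ℝ) ^ (j - 2) ≤ |a - b| := by
  have hi : (2 : ℝ) ^ i ≤ 2 ^ (j - 2) := zpow_le_zpow_right₀ one_le_two (by omega)
  have hj : (2 : ℝ) ^ (j - 1) = 2 ^ (j - 2) + 2 ^ (j - 2) := by
    rw [← two_mul, mul_comm, ← zpow_add_one₀ two_ne_zero]
    ring_nf
  rw [abs_sub_comm]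
  exact le_trans (by linarith) (le_abs_self (b - a))

theorem truncation_difference_estimate_general {α : Type*} (v : α → ℝ)
    (i j k : ℤ) (hij : i < j - 1)
    (y z : α) (hy : v y ≤ (2 : ℝ) ^ i) (hz : (2 : ℝ) ^ (j - 1) < v z) :
    |truncation v ((2 : ℝ) ^ (k - 1)) ((2 : ℝ) ^ k) y -
        truncation v ((2 : ℝ) ^ (k - 1)) ((2 : ℝ) ^ k) z| ≤
      4 * (2 : ℝ) ^ (k - j) * |v y - v z| := by
  have hlevels : (2 : ℝ) ^ (k - 1) ≤ 2 ^ k := zpow_le_zpow_right₀ one_le_two (by omega)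
  have hscale : 4 * (2 : ℝ) ^ (k - j) * 2 ^ (j - 2) = 2 ^ k := by
    rw [show (4 : ℝ) = 2 ^ (2 : ℤ) by norm_num, ← zpow_add₀ two_ne_zero,
      ← zpow_add₀ two_ne_zero]
    ring_nf
  calc |truncation v ((2 : ℝ) ^ (k - 1)) ((2 : ℝ) ^ k) y -
        truncation v ((2 : ℝ) ^ (k - 1)) ((2 : ℝ) ^ k) z|
      ≤ 2 ^ k - 2 ^ (k - 1) := abs_truncation_sub_truncation_le v hlevels y z
    _ ≤ 2 ^ k := sub_le_self _ (by positivity)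
    _ = 4 * 2 ^ (k - j) * 2 ^ (j - 2) := hscale.symm
    _ ≤ 4 * 2 ^ (k - j) * |v y - v z| := by
      gcongr
      exact two_zpow_sub_two_le_abs_sub hij hy hz

/-- Inequality (4.4): if `v(y) ≤ 2^i` and `v(z) > 2^{j−1}` with `i < j − 1` and
`i ≤ k ≤ j`, then `|v_{2^{k−1}}^{2^k}(y) − v_{2^{k−1}}^{2^k}(z)| ≤ 4·2^{k−j}|v(y) − v(z)|`. -/
theorem truncation_difference_estimate {α : Type*} (v : α → ℝ) (hv : ∀ x, 0 ≤ v x)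
    (i j k : ℤ) (hik : i ≤ k) (hkj : k ≤ j) (hij : i < j - 1)
    (y z : α) (hy : v y ≤ (2 : ℝ) ^ i) (hz : (2 : ℝ) ^ (j - 1) < v z) :
    |truncation v ((2 : ℝ) ^ (k - 1)) ((2 : ℝ) ^ k) y -
        truncation v ((2 : ℝ) ^ (k - 1)) ((2 : ℝ) ^ k) z| ≤
      4 * (2 : ℝ) ^ (k - j) * |v y - v z| :=
  truncation_difference_estimate_general v i j k hij y z hy hz
end
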